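/- arXiv:2309.17419 — 2 statements merged into one kernel-verified Lean document; each statement's English description precedes it below -/
import Mathlib

section
/- In the graph G of the resolving-set construction, for every Z ∈ 𝓩 and every pair a,b of distinct vertices of G, the set Z contains a vertex distinguishing a and b if and only if {a,b} ∉ P, where P is the set of all pairs {e_j,e'_j} with j ∈ [m]. -/
namespace ResConstr

/-! ## The resolving-set construction

Given a Sperner hypergraph `ℋ` with vertex set `{v_1, …, v_n}` (encoded as `Fin n`) and
edge set `E_1, …, E_m` (encoded as `E : Fin m → Set (Fin n)`), where `n = 2^p > 2` and
`m = 2^q > 2`, we build the graph `G` of the reduction from Trans-Enum to MinResolving.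
Vertex `v_i` of the paper is `Vert.v ⟨i-1⟩`, edge vertex `e_j` is `Vert.e ⟨j-1⟩`, etc.;
`U = {u_1, u'_1, …, u_{log n + 1}, u'_{log n + 1}}` is encoded by `Vert.u, Vert.u'` over
`Fin (p+1)` and `W` similarly by `Vert.w, Vert.w'` over `Fin (q+1)`. -/

inductive Vert (n m p q : ℕ) : Type
  | v : Fin n → Vert n m p q
  | e : Fin m → Vert n m p q
  | e' : Fin m → Vert n m p q
  | u : Fin (p + 1) → Vert n m p q
  | u' : Fin (p + 1) → Vert n m p q
  | w : Fin (q + 1) → Vert n m p q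
  | w' : Fin (q + 1) → Vert n m p q

variable {n m p q : ℕ}

/-- The base (one-sided) adjacency relation of the construction; the graph is obtained by
symmetrizing it.  `Nat.testBit (i+1) k = true` encodes `k+1 ∈ I(i+1)`, i.e. the `(k+1)`-th
bit (starting from 1) of the binary representation of the paper-index `i+1` equals 1. -/
def baseRel (E : Fin m → Set (Fin n)) : Vert n m p q → Vert n m p q → Prop
  | .v _, .v _ => True                                       -- V is a clique
  | .e _, .e _ => True                                       -- H is a clique
  | .e' _, .e' _ => True                                     -- H' is a clique
  | .v i, .e j => i ∉ E j                                    -- non-incidence between V and H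
  | .v _, .e' _ => True                                      -- V is complete to H'
  | .v i, .u k => Nat.testBit (i.val + 1) k.val = true       -- binary coding between V and U
  | .v i, .u' k => Nat.testBit (i.val + 1) k.val = true
  | .v _, .w _ => True                                       -- W is complete to V
  | .v _, .w' _ => True
  | .e j, .w k => Nat.testBit (j.val + 1) k.val = true       -- binary coding between H ∪ H' and W
  | .e j, .w' k => Nat.testBit (j.val + 1) k.val = true
  | .e' j, .w k => Nat.testBit (j.val + 1) k.val = true
  | .e' j, .w' k => Nat.testBit (j.val + 1) k.val = true
  | .u _, .u _ => True                                       -- U is a clique minus the edges u_i u'_i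
  | .u k, .u' k' => k ≠ k'
  | .u' _, .u' _ => True
  | .u _, .e _ => True                                       -- U is complete to H ∪ H'
  | .u _, .e' _ => True
  | .u' _, .e _ => True
  | .u' _, .e' _ => True
  | .w k, .w' k' => k = k'                                   -- the only edges inside W are w_j w'_j
  | _, _ => False

/-- The graph `G` of the resolving-set construction. -/
def G (E : Fin m → Set (Fin n)) : SimpleGraph (Vert n m p q) :=
  SimpleGraph.fromRel (baseRel E)

/-- `S` is a resolving set of `G`. -/
def IsResolvingSet {α : Type*} (G : SimpleGraph α) (S : Set α) : Prop :=
  ∀ a b : α, a ≠ b → ∃ z ∈ S, G.dist a z ≠ G.dist b z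

/-- `S` is an inclusion-wise minimal resolving set of `G`. -/
def IsMinimalResolvingSet {α : Type*} (G : SimpleGraph α) (S : Set α) : Prop :=
  IsResolvingSet G S ∧ ∀ S' : Set α, S' ⊂ S → ¬ IsResolvingSet G S'

/-- `T` is a transversal of the hypergraph with edges `E j`. -/
def IsTransversal (E : Fin m → Set (Fin n)) (T : Set (Fin n)) : Prop :=
  ∀ j : Fin m, (T ∩ E j).Nonempty

/-- `T` is an inclusion-wise minimal transversal of the hypergraph with edges `E j`. -/
def IsMinimalTransversal (E : Fin m → Set (Fin n)) (T : Set (Fin n)) : Prop :=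
  IsTransversal E T ∧ ∀ T' : Set (Fin n), T' ⊂ T → ¬ IsTransversal E T'

/-- The family `𝒵` of all sets `Z = X ∪ Y` where `X` picks exactly one vertex from each pair
`{u_k, u'_k}` and `Y` picks exactly one vertex from each pair `{w_k, w'_k}`. -/
def ZFam : Set (Set (Vert n m p q)) :=
  {Z | ∃ (x : Fin (p + 1) → Bool) (y : Fin (q + 1) → Bool),
    Z = (Set.range fun k => if x k then (Vert.u k : Vert n m p q) else Vert.u' k) ∪
        (Set.range fun k => if y k then (Vert.w k : Vert n m p q) else Vert.w' k)}

lemma dist_eq_two' {α : Type*} {G : SimpleGraph α} {a b c : α} (hab : a ≠ b)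
    (h2 : ¬ G.Adj a b) (h3 : G.Adj a c) (h4 : G.Adj c b) : G.dist a b = 2 := by
  have hle : G.dist a b ≤ 2 := by
    have := SimpleGraph.dist_le (SimpleGraph.Walk.cons h3 (SimpleGraph.Walk.cons h4 SimpleGraph.Walk.nil))
    simpa using this
  have hr : G.Reachable a b := ⟨SimpleGraph.Walk.cons h3 (SimpleGraph.Walk.cons h4 SimpleGraph.Walk.nil)⟩
  have h0 : 0 < G.dist a b := hr.pos_dist_of_ne hab
  have h1 : G.dist a b ≠ 1 := fun h => h2 (SimpleGraph.dist_eq_one_iff_adj.mp h)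
  omega

def uu (b : Bool) (k : Fin (p + 1)) : Vert n m p q := if b then .u k else .u' k
def ww (b : Bool) (k : Fin (q + 1)) : Vert n m p q := if b then .w k else .w' k

variable (E : Fin m → Set (Fin n))

lemma dist_v_uu_one {i : Fin n} {k : Fin (p+1)} (h : Nat.testBit (i.val + 1) k.val = true)
    (b : Bool) : (G E).dist (.v i) ((uu b k : Vert n m p q)) = 1 := by
  rw [SimpleGraph.dist_eq_one_iff_adj]
  cases b <;> simp [uu, G, SimpleGraph.fromRel_adj, baseRel, h]

lemma dist_v_uu_two {i : Fin n} {k : Fin (p+1)} (h : Nat.testBit (i.val + 1) k.val = false)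
    (hm : 0 < m) (b : Bool) : (G E).dist (.v i) ((uu b k : Vert n m p q)) = 2 := by
  have hadj1 : (G E).Adj (.v i) (.e' ⟨0, hm⟩ : Vert n m p q) := by
    simp [G, SimpleGraph.fromRel_adj, baseRel]
  cases b <;>
  · refine dist_eq_two' (by simp [uu]) ?_ hadj1 ?_ <;>
      simp [uu, G, SimpleGraph.fromRel_adj, baseRel, h]

lemma dist_v_ww (i : Fin n) (k : Fin (q+1)) (b : Bool) :
    (G E).dist (.v i) ((ww b k : Vert n m p q)) = 1 := by
  rw [SimpleGraph.dist_eq_one_iff_adj]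
  cases b <;> simp [ww, G, SimpleGraph.fromRel_adj, baseRel]

lemma dist_e_ww_one {j : Fin m} {k : Fin (q+1)} (h : Nat.testBit (j.val + 1) k.val = true)
    (b : Bool) : (G E).dist (.e j) ((ww b k : Vert n m p q)) = 1 := by
  rw [SimpleGraph.dist_eq_one_iff_adj]
  cases b <;> simp [ww, G, SimpleGraph.fromRel_adj, baseRel, h]

lemma dist_e'_ww_one {j : Fin m} {k : Fin (q+1)} (h : Nat.testBit (j.val + 1) k.val = true)
    (b : Bool) : (G E).dist (.e' j) ((ww b k : Vert n m p q)) = 1 := by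
  rw [SimpleGraph.dist_eq_one_iff_adj]
  cases b <;> simp [ww, G, SimpleGraph.fromRel_adj, baseRel, h]

lemma dist_e_ww_two {j : Fin m} {k : Fin (q+1)} (h : Nat.testBit (j.val + 1) k.val = false)
    (hk : 2 ^ k.val ≤ m) (b : Bool) : (G E).dist (.e j) ((ww b k : Vert n m p q)) = 2 := by
  have hp0 : 0 < 2 ^ k.val := Nat.pow_pos (by norm_num)
  have h2k : 2 ^ k.val - 1 < m := by omega
  have htb : Nat.testBit ((2 ^ k.val - 1) + 1) k.val = true := by
    have : (2 ^ k.val - 1) + 1 = 2 ^ k.val := by omega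
    rw [this]; exact Nat.testBit_two_pow_self
  have hne : j ≠ (⟨2 ^ k.val - 1, h2k⟩ : Fin m) := by
    intro he
    rw [he] at h
    simp [htb] at h
  have hadj1 : (G E).Adj (.e j) (.e ⟨2 ^ k.val - 1, h2k⟩ : Vert n m p q) := by
    simp [G, SimpleGraph.fromRel_adj, baseRel, hne]
  cases b <;>
  · refine dist_eq_two' (by simp [ww]) ?_ hadj1 ?_ <;>
      simp [ww, G, SimpleGraph.fromRel_adj, baseRel, h, htb]

lemma dist_e'_ww_two {j : Fin m} {k : Fin (q+1)} (h : Nat.testBit (j.val + 1) k.val = false)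
    (hk : 2 ^ k.val ≤ m) (b : Bool) : (G E).dist (.e' j) ((ww b k : Vert n m p q)) = 2 := by
  have h0 : 0 < 2 ^ k.val := Nat.pow_pos (by norm_num)
  have h2k : 2 ^ k.val - 1 < m := by omega
  have htb : Nat.testBit ((2 ^ k.val - 1) + 1) k.val = true := by
    have : (2 ^ k.val - 1) + 1 = 2 ^ k.val := by omega
    rw [this]; exact Nat.testBit_two_pow_self
  have hne : j ≠ (⟨2 ^ k.val - 1, h2k⟩ : Fin m) := by
    intro he
    rw [he] at h
    simp [htb] at h
  have hadj1 : (G E).Adj (.e' j) (.e' ⟨2 ^ k.val - 1, h2k⟩ : Vert n m p q) := by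
    simp [G, SimpleGraph.fromRel_adj, baseRel, hne]
  cases b <;>
  · refine dist_eq_two' (by simp [ww]) ?_ hadj1 ?_ <;>
      simp [ww, G, SimpleGraph.fromRel_adj, baseRel, h, htb]

lemma dist_e_uu (j : Fin m) (k : Fin (p+1)) (b : Bool) :
    (G E).dist (.e j) ((uu b k : Vert n m p q)) = 1 := by
  rw [SimpleGraph.dist_eq_one_iff_adj]
  cases b <;> simp [uu, G, SimpleGraph.fromRel_adj, baseRel]

lemma dist_e'_uu (j : Fin m) (k : Fin (p+1)) (b : Bool) :
    (G E).dist (.e' j) ((uu b k : Vert n m p q)) = 1 := by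
  rw [SimpleGraph.dist_eq_one_iff_adj]
  cases b <;> simp [uu, G, SimpleGraph.fromRel_adj, baseRel]

lemma dist_uu_ww (b b' : Bool) (k : Fin (p+1)) (k' : Fin (q+1)) (hk : 2 ^ k'.val ≤ m) :
    (G E).dist (uu b k) (ww b' k' : Vert n m p q) = 2 := by
  have h0 : 0 < 2 ^ k'.val := Nat.pow_pos (by norm_num)
  have h2k : 2 ^ k'.val - 1 < m := by omega
  have htb : Nat.testBit ((2 ^ k'.val - 1) + 1) k'.val = true := by
    have : (2 ^ k'.val - 1) + 1 = 2 ^ k'.val := by omega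
    rw [this]; exact Nat.testBit_two_pow_self
  cases b <;> cases b' <;>
  · refine dist_eq_two' (by simp [uu, ww]) ?_
      (c := (.e ⟨2 ^ k'.val - 1, h2k⟩ : Vert n m p q)) ?_ ?_ <;>
      simp [uu, ww, G, SimpleGraph.fromRel_adj, baseRel, htb]

lemma dist_uu_uu_one {k k' : Fin (p+1)} (h : k ≠ k') (b b' : Bool) :
    (G E).dist (uu b k) (uu b' k' : Vert n m p q) = 1 := by
  rw [SimpleGraph.dist_eq_one_iff_adj]
  cases b <;> cases b' <;> simp [uu, G, SimpleGraph.fromRel_adj, baseRel, h, h.symm]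

lemma dist_uu_uu_two (k : Fin (p+1)) (hm : 0 < m) (b : Bool) :
    (G E).dist (uu b k) (uu (!b) k : Vert n m p q) = 2 := by
  cases b <;>
  · refine dist_eq_two' (by simp [uu]) ?_ (c := (.e ⟨0, hm⟩ : Vert n m p q)) ?_ ?_ <;>
      simp [uu, G, SimpleGraph.fromRel_adj, baseRel]

lemma dist_ww_ww_one (k : Fin (q+1)) (b : Bool) :
    (G E).dist (ww b k) (ww (!b) k : Vert n m p q) = 1 := by
  rw [SimpleGraph.dist_eq_one_iff_adj]
  cases b <;> simp [ww, G, SimpleGraph.fromRel_adj, baseRel]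

lemma dist_ww_ww_two {k k' : Fin (q+1)} (h : k ≠ k') (hn : 0 < n) (b b' : Bool) :
    (G E).dist (ww b k) (ww b' k' : Vert n m p q) = 2 := by
  cases b <;> cases b' <;>
  · refine dist_eq_two' (by simp [ww, h]) ?_ (c := (.v ⟨0, hn⟩ : Vert n m p q)) ?_ ?_ <;>
      simp [ww, G, SimpleGraph.fromRel_adj, baseRel, h, h.symm]


lemma exists_bit_true {x t : ℕ} (hx : 0 < x) (hxe : x ≤ 2 ^ t) :
    ∃ k ≤ t, Nat.testBit x k = true := by
  obtain ⟨i, hi, -⟩ := Nat.exists_most_significant_bit (by omega : x ≠ 0)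
  refine ⟨i, ?_, hi⟩
  have h1 := Nat.ge_two_pow_of_testBit hi
  by_contra h
  push_neg at h
  have : 2 ^ t < 2 ^ i := Nat.pow_lt_pow_right (by norm_num) h
  omega

lemma exists_bit_false {x t : ℕ} (ht : 0 < t) (hxe : x ≤ 2 ^ t) :
    ∃ k ≤ t, Nat.testBit x k = false := by
  rcases eq_or_lt_of_le hxe with h | h
  · exact ⟨0, Nat.zero_le _, by rw [h]; exact Nat.testBit_two_pow_of_ne (by omega)⟩
  · exact ⟨t, le_refl _, Nat.testBit_lt_two_pow h⟩

lemma exists_bit_diff {x y t : ℕ} (hx : x ≤ 2 ^ t) (hy : y ≤ 2 ^ t) (hxy : x ≠ y) :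
    ∃ k ≤ t, Nat.testBit x k ≠ Nat.testBit y k := by
  by_contra h
  push_neg at h
  apply hxy
  apply Nat.eq_of_testBit_eq
  intro k
  by_cases hk : k ≤ t
  · exact h k hk
  · push_neg at hk
    have h2 : 2 ^ t < 2 ^ k := Nat.pow_lt_pow_right (by norm_num) hk
    rw [Nat.testBit_lt_two_pow (by omega), Nat.testBit_lt_two_pow (by omega)]

def Zset (x : Fin (p + 1) → Bool) (y : Fin (q + 1) → Bool) : Set (Vert n m p q) :=
  (Set.range fun k => uu (x k) k) ∪ (Set.range fun k => ww (y k) k)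

lemma uu_mem (x : Fin (p + 1) → Bool) (y : Fin (q + 1) → Bool) (k : Fin (p + 1)) :
    (uu (x k) k : Vert n m p q) ∈ Zset x y :=
  Set.mem_union_left _ (Set.mem_range_self k)

lemma ww_mem (x : Fin (p + 1) → Bool) (y : Fin (q + 1) → Bool) (k : Fin (q + 1)) :
    (ww (y k) k : Vert n m p q) ∈ Zset x y :=
  Set.mem_union_right _ (Set.mem_range_self k)

section Claims

variable (x : Fin (p + 1) → Bool) (y : Fin (q + 1) → Bool)

lemma claim_vv (hn : n = 2 ^ p) (hm0 : 0 < m) (i i' : Fin n) (h : i ≠ i') :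
    ∃ z ∈ Zset x y, (G E).dist (.v i) z ≠ (G E).dist (.v i') z := by
  obtain ⟨k, hk, hne⟩ := exists_bit_diff (x := i.val + 1) (y := i'.val + 1) (t := p)
    (by have := i.isLt; omega) (by have := i'.isLt; omega)
    (fun hc => h (Fin.ext (by omega)))
  set kf : Fin (p + 1) := ⟨k, by omega⟩ with hkf
  refine ⟨uu (x kf) kf, uu_mem x y kf, ?_⟩
  cases hx1 : Nat.testBit (i.val + 1) k <;> cases hx2 : Nat.testBit (i'.val + 1) k
  · exact absurd (hx1.trans hx2.symm) hne
  · rw [dist_v_uu_two E (k := kf) hx1 hm0, dist_v_uu_one E (k := kf) hx2]; omega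
  · rw [dist_v_uu_one E (k := kf) hx1, dist_v_uu_two E (k := kf) hx2 hm0]; omega
  · exact absurd (hx1.trans hx2.symm) hne

lemma claim_ve (hm : m = 2 ^ q) (hq : 0 < q) (i : Fin n) (j : Fin m) :
    ∃ z ∈ Zset x y, (G E).dist (.v i) z ≠ (G E).dist (.e j) z := by
  obtain ⟨k, hk, hb⟩ := exists_bit_false (x := j.val + 1) (t := q) hq (by have := j.isLt; omega)
  set kf : Fin (q + 1) := ⟨k, by omega⟩ with hkf
  refine ⟨ww (y kf) kf, ww_mem x y kf, ?_⟩
  rw [dist_v_ww, dist_e_ww_two E (k := kf) hb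
    (by rw [hm]; exact Nat.pow_le_pow_right (by norm_num) hk)]
  omega

lemma claim_ve' (hm : m = 2 ^ q) (hq : 0 < q) (i : Fin n) (j : Fin m) :
    ∃ z ∈ Zset x y, (G E).dist (.v i) z ≠ (G E).dist (.e' j) z := by
  obtain ⟨k, hk, hb⟩ := exists_bit_false (x := j.val + 1) (t := q) hq (by have := j.isLt; omega)
  set kf : Fin (q + 1) := ⟨k, by omega⟩ with hkf
  refine ⟨ww (y kf) kf, ww_mem x y kf, ?_⟩
  rw [dist_v_ww, dist_e'_ww_two E (k := kf) hb
    (by rw [hm]; exact Nat.pow_le_pow_right (by norm_num) hk)]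
  omega

lemma claim_v_uu (hm0 : 0 < m) (i : Fin n) (c : Bool) (k0 : Fin (p + 1)) :
    ∃ z ∈ Zset x y, (G E).dist (.v i) z ≠ (G E).dist (uu c k0) z := by
  refine ⟨ww (y 0) 0, ww_mem x y 0, ?_⟩
  rw [dist_v_ww, dist_uu_ww E c (y 0) k0 0 (by simp; omega)]
  omega

lemma claim_v_ww (hn : n = 2 ^ p) (hm : m = 2 ^ q) (i : Fin n) (c : Bool) (k0 : Fin (q + 1)) :
    ∃ z ∈ Zset x y, (G E).dist (.v i) z ≠ (G E).dist (ww c k0) z := by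
  obtain ⟨k, hk, hb⟩ := exists_bit_true (x := i.val + 1) (t := p) (by omega) (by have := i.isLt; omega)
  set kf : Fin (p + 1) := ⟨k, by omega⟩ with hkf
  refine ⟨uu (x kf) kf, uu_mem x y kf, ?_⟩
  rw [dist_v_uu_one E (k := kf) hb, SimpleGraph.dist_comm (u := ww c k0),
    dist_uu_ww E (x kf) c kf k0
      (by rw [hm]; exact Nat.pow_le_pow_right (by norm_num) (by have := k0.isLt; omega))]
  omega

lemma claim_ee (hm : m = 2 ^ q) (j j' : Fin m) (h : j ≠ j') :
    ∃ z ∈ Zset x y, (G E).dist (.e j) z ≠ (G E).dist (.e j') z := by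
  obtain ⟨k, hk, hne⟩ := exists_bit_diff (x := j.val + 1) (y := j'.val + 1) (t := q)
    (by have := j.isLt; omega) (by have := j'.isLt; omega)
    (fun hc => h (Fin.ext (by omega)))
  set kf : Fin (q + 1) := ⟨k, by omega⟩ with hkf
  have hpw : 2 ^ kf.val ≤ m := by
    rw [hm]; exact Nat.pow_le_pow_right (by norm_num) hk
  refine ⟨ww (y kf) kf, ww_mem x y kf, ?_⟩
  cases hx1 : Nat.testBit (j.val + 1) k <;> cases hx2 : Nat.testBit (j'.val + 1) k
  · exact absurd (hx1.trans hx2.symm) hne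
  · rw [dist_e_ww_two E (k := kf) hx1 hpw, dist_e_ww_one E (k := kf) hx2]; omega
  · rw [dist_e_ww_one E (k := kf) hx1, dist_e_ww_two E (k := kf) hx2 hpw]; omega
  · exact absurd (hx1.trans hx2.symm) hne

lemma claim_ee' (hm : m = 2 ^ q) (j j' : Fin m) (h : j ≠ j') :
    ∃ z ∈ Zset x y, (G E).dist (.e j) z ≠ (G E).dist (.e' j') z := by
  obtain ⟨k, hk, hne⟩ := exists_bit_diff (x := j.val + 1) (y := j'.val + 1) (t := q)
    (by have := j.isLt; omega) (by have := j'.isLt; omega)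
    (fun hc => h (Fin.ext (by omega)))
  set kf : Fin (q + 1) := ⟨k, by omega⟩ with hkf
  have hpw : 2 ^ kf.val ≤ m := by
    rw [hm]; exact Nat.pow_le_pow_right (by norm_num) hk
  refine ⟨ww (y kf) kf, ww_mem x y kf, ?_⟩
  cases hx1 : Nat.testBit (j.val + 1) k <;> cases hx2 : Nat.testBit (j'.val + 1) k
  · exact absurd (hx1.trans hx2.symm) hne
  · rw [dist_e_ww_two E (k := kf) hx1 hpw, dist_e'_ww_one E (k := kf) hx2]; omega
  · rw [dist_e_ww_one E (k := kf) hx1, dist_e'_ww_two E (k := kf) hx2 hpw]; omega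
  · exact absurd (hx1.trans hx2.symm) hne

lemma claim_e'e' (hm : m = 2 ^ q) (j j' : Fin m) (h : j ≠ j') :
    ∃ z ∈ Zset x y, (G E).dist (.e' j) z ≠ (G E).dist (.e' j') z := by
  obtain ⟨k, hk, hne⟩ := exists_bit_diff (x := j.val + 1) (y := j'.val + 1) (t := q)
    (by have := j.isLt; omega) (by have := j'.isLt; omega)
    (fun hc => h (Fin.ext (by omega)))
  set kf : Fin (q + 1) := ⟨k, by omega⟩ with hkf
  have hpw : 2 ^ kf.val ≤ m := by
    rw [hm]; exact Nat.pow_le_pow_right (by norm_num) hk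
  refine ⟨ww (y kf) kf, ww_mem x y kf, ?_⟩
  cases hx1 : Nat.testBit (j.val + 1) k <;> cases hx2 : Nat.testBit (j'.val + 1) k
  · exact absurd (hx1.trans hx2.symm) hne
  · rw [dist_e'_ww_two E (k := kf) hx1 hpw, dist_e'_ww_one E (k := kf) hx2]; omega
  · rw [dist_e'_ww_one E (k := kf) hx1, dist_e'_ww_two E (k := kf) hx2 hpw]; omega
  · exact absurd (hx1.trans hx2.symm) hne

lemma claim_e_uu (hm : m = 2 ^ q) (j : Fin m) (c : Bool) (k0 : Fin (p + 1)) :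
    ∃ z ∈ Zset x y, (G E).dist (.e j) z ≠ (G E).dist (uu c k0) z := by
  obtain ⟨k, hk, hb⟩ := exists_bit_true (x := j.val + 1) (t := q) (by omega) (by have := j.isLt; omega)
  set kf : Fin (q + 1) := ⟨k, by omega⟩ with hkf
  refine ⟨ww (y kf) kf, ww_mem x y kf, ?_⟩
  rw [dist_e_ww_one E (k := kf) hb, dist_uu_ww E c (y kf) k0 kf
    (by rw [hm]; exact Nat.pow_le_pow_right (by norm_num) hk)]
  omega

lemma claim_e'_uu (hm : m = 2 ^ q) (j : Fin m) (c : Bool) (k0 : Fin (p + 1)) :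
    ∃ z ∈ Zset x y, (G E).dist (.e' j) z ≠ (G E).dist (uu c k0) z := by
  obtain ⟨k, hk, hb⟩ := exists_bit_true (x := j.val + 1) (t := q) (by omega) (by have := j.isLt; omega)
  set kf : Fin (q + 1) := ⟨k, by omega⟩ with hkf
  refine ⟨ww (y kf) kf, ww_mem x y kf, ?_⟩
  rw [dist_e'_ww_one E (k := kf) hb, dist_uu_ww E c (y kf) k0 kf
    (by rw [hm]; exact Nat.pow_le_pow_right (by norm_num) hk)]
  omega

lemma claim_e_ww (hm : m = 2 ^ q) (j : Fin m) (c : Bool) (k0 : Fin (q + 1)) :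
    ∃ z ∈ Zset x y, (G E).dist (.e j) z ≠ (G E).dist (ww c k0) z := by
  refine ⟨uu (x 0) 0, uu_mem x y 0, ?_⟩
  rw [dist_e_uu, SimpleGraph.dist_comm (u := ww c k0), dist_uu_ww E (x 0) c 0 k0
    (by rw [hm]; exact Nat.pow_le_pow_right (by norm_num) (by have := k0.isLt; omega))]
  omega

lemma claim_e'_ww (hm : m = 2 ^ q) (j : Fin m) (c : Bool) (k0 : Fin (q + 1)) :
    ∃ z ∈ Zset x y, (G E).dist (.e' j) z ≠ (G E).dist (ww c k0) z := by
  refine ⟨uu (x 0) 0, uu_mem x y 0, ?_⟩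
  rw [dist_e'_uu, SimpleGraph.dist_comm (u := ww c k0), dist_uu_ww E (x 0) c 0 k0
    (by rw [hm]; exact Nat.pow_le_pow_right (by norm_num) (by have := k0.isLt; omega))]
  omega

lemma claim_uu_uu (hm0 : 0 < m) (c c' : Bool) (k0 k1 : Fin (p + 1))
    (hne : (uu c k0 : Vert n m p q) ≠ uu c' k1) :
    ∃ z ∈ Zset x y, (G E).dist (uu c k0) z ≠ (G E).dist (uu c' k1) z := by
  refine ⟨uu (x k0) k0, uu_mem x y k0, ?_⟩
  by_cases hk : k0 = k1
  · subst hk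
    have hc : c' = !c := by
      cases c <;> cases c' <;> simp_all [uu]
    subst hc
    by_cases hxc : x k0 = c
    · have h2 : (G E).dist (uu (!c) k0) (uu c k0 : Vert n m p q) = 2 := by
        have := dist_uu_uu_two (q := q) E k0 hm0 (!c)
        rwa [Bool.not_not] at this
      rw [hxc, SimpleGraph.dist_self, h2]
      omega
    · have hxc' : x k0 = !c := by cases c <;> cases hx : (x k0) <;> simp_all
      rw [hxc', dist_uu_uu_two E k0 hm0 c, SimpleGraph.dist_self]
      omega
  · rw [dist_uu_uu_one E (fun hh => hk hh.symm) c' (x k0)]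
    by_cases hxc : x k0 = c
    · rw [hxc, SimpleGraph.dist_self]; omega
    · have hxc' : x k0 = !c := by cases c <;> cases hx : (x k0) <;> simp_all
      rw [hxc', dist_uu_uu_two E k0 hm0 c]
      omega

lemma claim_uu_ww (hp : 0 < p) (hm : m = 2 ^ q) (c c' : Bool) (k0 : Fin (p + 1))
    (k1 : Fin (q + 1)) :
    ∃ z ∈ Zset x y, (G E).dist (uu c k0) z ≠ (G E).dist (ww c' k1) z := by
  obtain ⟨k', hk'⟩ : ∃ k' : Fin (p + 1), k0 ≠ k' := by
    by_cases h0 : k0 = ⟨0, by omega⟩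
    · exact ⟨⟨1, by omega⟩, by rw [h0]; intro hcon; simpa using congrArg Fin.val hcon⟩
    · exact ⟨⟨0, by omega⟩, h0⟩
  refine ⟨uu (x k') k', uu_mem x y k', ?_⟩
  rw [dist_uu_uu_one E hk', SimpleGraph.dist_comm (u := ww c' k1),
    dist_uu_ww E (x k') c' k' k1
      (by rw [hm]; exact Nat.pow_le_pow_right (by norm_num) (by have := k1.isLt; omega))]
  omega

lemma claim_ww_ww (hn0 : 0 < n) (c c' : Bool) (k0 k1 : Fin (q + 1))
    (hne : (ww c k0 : Vert n m p q) ≠ ww c' k1) :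
    ∃ z ∈ Zset x y, (G E).dist (ww c k0) z ≠ (G E).dist (ww c' k1) z := by
  refine ⟨ww (y k0) k0, ww_mem x y k0, ?_⟩
  by_cases hk : k0 = k1
  · subst hk
    have hc : c' = !c := by
      cases c <;> cases c' <;> simp_all [ww]
    subst hc
    by_cases hxc : y k0 = c
    · have h2 : (G E).dist (ww (!c) k0) (ww c k0 : Vert n m p q) = 1 := by
        have := dist_ww_ww_one (p := p) E k0 (!c)
        rwa [Bool.not_not] at this
      rw [hxc, SimpleGraph.dist_self, h2]
      omega
    · have hxc' : y k0 = !c := by cases c <;> cases hx : (y k0) <;> simp_all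
      rw [hxc', dist_ww_ww_one E k0 c, SimpleGraph.dist_self]
      omega
  · rw [dist_ww_ww_two E (fun hh => hk hh.symm) hn0 c' (y k0)]
    by_cases hxc : y k0 = c
    · rw [hxc, SimpleGraph.dist_self]; omega
    · have hxc' : y k0 = !c := by cases c <;> cases hx : (y k0) <;> simp_all
      rw [hxc', dist_ww_ww_one E k0 c]
      omega

lemma dist_e_eq_e' (hm : m = 2 ^ q) (j : Fin m) {z : Vert n m p q} (hz : z ∈ Zset x y) :
    (G E).dist (.e j) z = (G E).dist (.e' j) z := by
  rcases hz with ⟨k, rfl⟩ | ⟨k, rfl⟩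
  · rw [dist_e_uu, dist_e'_uu]
  · have hpw : 2 ^ k.val ≤ m := by
      rw [hm]; exact Nat.pow_le_pow_right (by norm_num) (by have := k.isLt; omega)
    cases hb : Nat.testBit (j.val + 1) k.val
    · rw [dist_e_ww_two E hb hpw, dist_e'_ww_two E hb hpw]
    · rw [dist_e_ww_one E hb, dist_e'_ww_one E hb]

end Claims

/-- In the graph `G` of the resolving-set construction, for every `Z ∈ 𝒵` and every pair
`a, b` of distinct vertices, `Z` contains a vertex distinguishing `a` and `b` if and only if
`{a, b}` is not one of the pairs `{e_j, e'_j}`. -/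
theorem Z_distinguishes_iff
    (E : Fin m → Set (Fin n))
    (hn : n = 2 ^ p) (hm : m = 2 ^ q) (hn2 : 2 < n) (hm2 : 2 < m)
    (hSperner : ∀ j j' : Fin m, E j ⊆ E j' → j = j')
    (hfull : ∀ j : Fin m, E j ≠ Set.univ)
    (Z : Set (Vert n m p q)) (hZ : Z ∈ ZFam)
    (a b : Vert n m p q) (hab : a ≠ b) :
    (∃ z ∈ Z, (G E).dist a z ≠ (G E).dist b z) ↔
      ¬ ∃ j : Fin m, ({a, b} : Set (Vert n m p q)) = {Vert.e j, Vert.e' j} := by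
  obtain ⟨x, y, rfl⟩ := hZ
  have hp : 0 < p := by
    rcases Nat.eq_zero_or_pos p with h | h
    · subst h; simp at hn; omega
    · exact h
  have hq : 0 < q := by
    rcases Nat.eq_zero_or_pos q with h | h
    · subst h; simp at hm; omega
    · exact h
  have hm0 : 0 < m := by omega
  have hn0 : 0 < n := by omega
  have hZdef : (Set.range fun k => if x k then (Vert.u k : Vert n m p q) else Vert.u' k) ∪
      (Set.range fun k => if y k then (Vert.w k : Vert n m p q) else Vert.w' k) = Zset x y := rfl
  rw [hZdef]
  constructor
  · rintro ⟨z, hzZ, hzd⟩ ⟨j, hj⟩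
    have haj : a = Vert.e j ∨ a = Vert.e' j := by
      have ham : a ∈ ({Vert.e j, Vert.e' j} : Set (Vert n m p q)) := by
        rw [← hj]; exact Set.mem_insert _ _
      simpa using ham
    have hbj : b = Vert.e j ∨ b = Vert.e' j := by
      have hbm : b ∈ ({Vert.e j, Vert.e' j} : Set (Vert n m p q)) := by
        rw [← hj]; exact Set.mem_insert_of_mem _ rfl
      simpa using hbm
    rcases haj with rfl | rfl <;> rcases hbj with rfl | rfl
    · exact hab rfl
    · exact hzd (dist_e_eq_e' E x y hm j hzZ)
    · exact hzd ((dist_e_eq_e' E x y hm j hzZ).symm)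
    · exact hab rfl
  · intro hP
    have swap : ∀ {a b : Vert n m p q},
        (∃ z ∈ Zset x y, (G E).dist b z ≠ (G E).dist a z) →
        (∃ z ∈ Zset x y, (G E).dist a z ≠ (G E).dist b z) := by
      rintro a b ⟨z, h1, h2⟩; exact ⟨z, h1, h2.symm⟩
    rcases a with i | j | j | k0 | k0 | k0 | k0 <;>
      rcases b with i' | j' | j' | k1 | k1 | k1 | k1
    · exact claim_vv E x y hn hm0 i i' (fun h => hab (congrArg Vert.v h))
    · exact claim_ve E x y hm hq i j'
    · exact claim_ve' E x y hm hq i j'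
    · exact claim_v_uu E x y hm0 i true k1
    · exact claim_v_uu E x y hm0 i false k1
    · exact claim_v_ww E x y hn hm i true k1
    · exact claim_v_ww E x y hn hm i false k1
    · exact swap (claim_ve E x y hm hq i' j)
    · exact claim_ee E x y hm j j' (fun h => hab (congrArg Vert.e h))
    · exact claim_ee' E x y hm j j' (by rintro rfl; exact hP ⟨j, rfl⟩)
    · exact claim_e_uu E x y hm j true k1
    · exact claim_e_uu E x y hm j false k1
    · exact claim_e_ww E x y hm j true k1
    · exact claim_e_ww E x y hm j false k1
    · exact swap (claim_ve' E x y hm hq i' j)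
    · exact swap (claim_ee' E x y hm j' j
        (by rintro rfl; exact hP ⟨j', Set.pair_comm _ _⟩))
    · exact claim_e'e' E x y hm j j' (fun h => hab (congrArg Vert.e' h))
    · exact claim_e'_uu E x y hm j true k1
    · exact claim_e'_uu E x y hm j false k1
    · exact claim_e'_ww E x y hm j true k1
    · exact claim_e'_ww E x y hm j false k1
    · exact swap (claim_v_uu E x y hm0 i' true k0)
    · exact swap (claim_e_uu E x y hm j' true k0)
    · exact swap (claim_e'_uu E x y hm j' true k0)
    · exact claim_uu_uu E x y hm0 true true k0 k1 hab
    · exact claim_uu_uu E x y hm0 true false k0 k1 hab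
    · exact claim_uu_ww E x y hp hm true true k0 k1
    · exact claim_uu_ww E x y hp hm true false k0 k1
    · exact swap (claim_v_uu E x y hm0 i' false k0)
    · exact swap (claim_e_uu E x y hm j' false k0)
    · exact swap (claim_e'_uu E x y hm j' false k0)
    · exact claim_uu_uu E x y hm0 false true k0 k1 hab
    · exact claim_uu_uu E x y hm0 false false k0 k1 hab
    · exact claim_uu_ww E x y hp hm false true k0 k1
    · exact claim_uu_ww E x y hp hm false false k0 k1
    · exact swap (claim_v_ww E x y hn hm i' true k0)
    · exact swap (claim_e_ww E x y hm j' true k0)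
    · exact swap (claim_e'_ww E x y hm j' true k0)
    · exact swap (claim_uu_ww E x y hp hm true true k1 k0)
    · exact swap (claim_uu_ww E x y hp hm false true k1 k0)
    · exact claim_ww_ww E x y hn0 true true k0 k1 hab
    · exact claim_ww_ww E x y hn0 true false k0 k1 hab
    · exact swap (claim_v_ww E x y hn hm i' false k0)
    · exact swap (claim_e_ww E x y hm j' false k0)
    · exact swap (claim_e'_ww E x y hm j' false k0)
    · exact swap (claim_uu_ww E x y hp hm true false k1 k0)
    · exact swap (claim_uu_ww E x y hp hm false false k1 k0)
    · exact claim_ww_ww E x y hn0 false true k0 k1 hab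
    · exact claim_ww_ww E x y hn0 false false k0 k1 hab


end ResConstr
end

section
/- In the graph G of the resolving-set construction, if S is a minimal resolving set of G such that S ∩ (H ∪ H') = ∅, then S = Z ∪ T for some Z ∈ 𝓩 and some minimal transversal T of 𝓗. -/
namespace ResConstr

variable {n m p q : ℕ}

/-! ### Auxiliary lemmas -/

private lemma bool_iff_eq {a b : Bool} (h : (a = true) ↔ (b = true)) : a = b := by
  cases a <;> cases b <;> simp_all

private lemma bits_exists_true {a P : ℕ} (ha : a ≠ 0) (hlt : a < 2 ^ (P + 1)) :
    ∃ k : Fin (P + 1), a.testBit k.val = true := by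
  obtain ⟨i, hi, -⟩ := Nat.exists_most_significant_bit ha
  have hiP : i < P + 1 := by
    by_contra h
    rw [Nat.testBit_lt_two_pow
      (lt_of_lt_of_le hlt (Nat.pow_le_pow_right (by norm_num) (le_of_not_gt h)))] at hi
    exact Bool.noConfusion hi
  exact ⟨⟨i, hiP⟩, hi⟩

private lemma bits_exists_false {a P : ℕ} (hP : 1 ≤ P) (ha : a ≤ 2 ^ P) :
    ∃ k : Fin (P + 1), a.testBit k.val = false := by
  by_cases h0 : a.testBit 0 = true
  · refine ⟨⟨P, lt_add_one P⟩, ?_⟩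
    by_contra hp
    rw [Bool.not_eq_false] at hp
    have h1 : 2 ^ P ≤ a := by
      by_contra hlt
      rw [Nat.testBit_lt_two_pow (lt_of_not_ge hlt)] at hp
      exact Bool.noConfusion hp
    have ha' : a = 2 ^ P := le_antisymm ha h1
    rw [ha', Nat.testBit_two_pow_of_ne (by omega : P ≠ 0)] at h0
    exact Bool.noConfusion h0
  · exact ⟨⟨0, by omega⟩, by simpa using h0⟩

private lemma bits_exists_ne {a b P : ℕ} (hab : a ≠ b) (ha : a < 2 ^ (P + 1))
    (hb : b < 2 ^ (P + 1)) : ∃ k : Fin (P + 1), a.testBit k.val ≠ b.testBit k.val := by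
  by_contra h
  push_neg at h
  refine hab (Nat.eq_of_testBit_eq fun i => ?_)
  by_cases hi : i < P + 1
  · exact h ⟨i, hi⟩
  · rw [Nat.testBit_lt_two_pow
        (lt_of_lt_of_le ha (Nat.pow_le_pow_right (by norm_num) (le_of_not_gt hi))),
      Nat.testBit_lt_two_pow
        (lt_of_lt_of_le hb (Nat.pow_le_pow_right (by norm_num) (le_of_not_gt hi)))]

private lemma exists_common_nbr (E : Fin m → Set (Fin n))
    (hn : n = 2 ^ p) (hm : m = 2 ^ q) (hn2 : 2 < n) (hm2 : 2 < m)
    (hfull : ∀ j : Fin m, E j ≠ Set.univ) (a b : Vert n m p q) :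
    ∃ c, (G E).Adj a c ∧ (G E).Adj b c := by
  have hn0 : 0 < n := by omega
  have hm0 : 0 < m := by omega
  have hp1 : 1 ≤ p := by
    rcases Nat.eq_zero_or_pos p with h | h
    · subst h; rw [hn] at hn2; norm_num at hn2
    · exact h
  have hvk : ∀ k : Fin (p + 1), ∃ i : Fin n, Nat.testBit (i.val + 1) k.val = true := by
    intro k
    have h2 : 0 < 2 ^ k.val := pow_pos (by norm_num) _
    have h1 : 2 ^ k.val ≤ 2 ^ p := Nat.pow_le_pow_right (by norm_num) (by omega)
    refine ⟨⟨2 ^ k.val - 1, by omega⟩, ?_⟩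
    have he : 2 ^ k.val - 1 + 1 = 2 ^ k.val := by omega
    simp only [he]
    exact Nat.testBit_two_pow_self
  have hvbit : ∀ i : Fin n, ∃ k : Fin (p + 1), Nat.testBit (i.val + 1) k.val = true := by
    intro i
    have h2 : (2:ℕ) ^ p < 2 ^ (p + 1) := Nat.pow_lt_pow_succ (by norm_num)
    have h3 : i.val + 1 ≤ 2 ^ p := by rw [← hn]; exact i.2
    exact bits_exists_true (by omega) (by omega)
  rcases a with i | j | j | k | k | l | l <;> rcases b with i' | j' | j' | k' | k' | l' | l' <;>
    first
    | (refine ⟨Vert.e' ⟨0, hm0⟩, ?_, ?_⟩ <;> simp [G, SimpleGraph.fromRel_adj, baseRel] <;> done)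
    | (refine ⟨Vert.u ⟨0, by omega⟩, ?_, ?_⟩ <;> simp [G, SimpleGraph.fromRel_adj, baseRel] <;> done)
    | (refine ⟨Vert.v ⟨0, hn0⟩, ?_, ?_⟩ <;> simp [G, SimpleGraph.fromRel_adj, baseRel] <;> done)
    | (obtain ⟨kb, hkb⟩ := hvbit i
       refine ⟨Vert.u kb, ?_, ?_⟩ <;> simp [G, SimpleGraph.fromRel_adj, baseRel, hkb] <;> done)
    | (obtain ⟨kb, hkb⟩ := hvbit i'
       refine ⟨Vert.u kb, ?_, ?_⟩ <;> simp [G, SimpleGraph.fromRel_adj, baseRel, hkb] <;> done)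
    | (refine ⟨Vert.w' l', ?_, ?_⟩ <;> simp [G, SimpleGraph.fromRel_adj, baseRel] <;> done)
    | (refine ⟨Vert.w l', ?_, ?_⟩ <;> simp [G, SimpleGraph.fromRel_adj, baseRel] <;> done)
    | (refine ⟨Vert.w' l, ?_, ?_⟩ <;> simp [G, SimpleGraph.fromRel_adj, baseRel] <;> done)
    | (refine ⟨Vert.w l, ?_, ?_⟩ <;> simp [G, SimpleGraph.fromRel_adj, baseRel] <;> done)
    | (obtain ⟨k2, hk2⟩ :=
        Fintype.exists_ne_of_one_lt_card (by rw [Fintype.card_fin]; omega) k'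
       refine ⟨Vert.u k2, ?_, ?_⟩ <;>
         simp [G, SimpleGraph.fromRel_adj, baseRel, hk2, Ne.symm hk2] <;> done)
    | (obtain ⟨k2, hk2⟩ :=
        Fintype.exists_ne_of_one_lt_card (by rw [Fintype.card_fin]; omega) k
       refine ⟨Vert.u k2, ?_, ?_⟩ <;>
         simp [G, SimpleGraph.fromRel_adj, baseRel, hk2, Ne.symm hk2] <;> done)
    | (obtain ⟨ib, hib⟩ := (Set.ne_univ_iff_exists_notMem _).mp (hfull j)
       refine ⟨Vert.v ib, ?_, ?_⟩ <;> simp [G, SimpleGraph.fromRel_adj, baseRel, hib] <;> done)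
    | (obtain ⟨ib, hib⟩ := (Set.ne_univ_iff_exists_notMem _).mp (hfull j')
       refine ⟨Vert.v ib, ?_, ?_⟩ <;> simp [G, SimpleGraph.fromRel_adj, baseRel, hib] <;> done)
    | (obtain ⟨iv, hiv⟩ := hvk k
       refine ⟨Vert.v iv, ?_, ?_⟩ <;> simp [G, SimpleGraph.fromRel_adj, baseRel, hiv] <;> done)
    | (obtain ⟨iv, hiv⟩ := hvk k'
       refine ⟨Vert.v iv, ?_, ?_⟩ <;> simp [G, SimpleGraph.fromRel_adj, baseRel, hiv] <;> done)

private lemma reach (E : Fin m → Set (Fin n))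
    (hn : n = 2 ^ p) (hm : m = 2 ^ q) (hn2 : 2 < n) (hm2 : 2 < m)
    (hfull : ∀ j : Fin m, E j ≠ Set.univ) (a b : Vert n m p q) :
    (G E).Reachable a b := by
  obtain ⟨c, h1, h2⟩ := exists_common_nbr E hn hm hn2 hm2 hfull a b
  exact ⟨SimpleGraph.Walk.cons h1 (SimpleGraph.Walk.cons h2.symm SimpleGraph.Walk.nil)⟩

private lemma dist_two (E : Fin m → Set (Fin n))
    (hn : n = 2 ^ p) (hm : m = 2 ^ q) (hn2 : 2 < n) (hm2 : 2 < m)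
    (hfull : ∀ j : Fin m, E j ≠ Set.univ) {a b : Vert n m p q}
    (hab : a ≠ b) (hnadj : ¬ (G E).Adj a b) : (G E).dist a b = 2 := by
  obtain ⟨c, h1, h2⟩ := exists_common_nbr E hn hm hn2 hm2 hfull a b
  have hle : (G E).dist a b ≤ 2 := by
    simpa using SimpleGraph.dist_le
      (SimpleGraph.Walk.cons h1 (SimpleGraph.Walk.cons h2.symm SimpleGraph.Walk.nil))
  have h0 : (G E).dist a b ≠ 0 := by
    intro h
    rcases SimpleGraph.dist_eq_zero_iff_eq_or_not_reachable.mp h with h' | h'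
    · exact hab h'
    · exact h' ⟨SimpleGraph.Walk.cons h1 (SimpleGraph.Walk.cons h2.symm SimpleGraph.Walk.nil)⟩
  have h1' : (G E).dist a b ≠ 1 := fun h => hnadj (SimpleGraph.dist_eq_one_iff_adj.mp h)
  omega

private lemma dist_ne_iff (E : Fin m → Set (Fin n))
    (hn : n = 2 ^ p) (hm : m = 2 ^ q) (hn2 : 2 < n) (hm2 : 2 < m)
    (hfull : ∀ j : Fin m, E j ≠ Set.univ) {a b z : Vert n m p q} (hab : a ≠ b) :
    (G E).dist a z ≠ (G E).dist b z ↔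
      z = a ∨ z = b ∨ ¬ ((G E).Adj a z ↔ (G E).Adj b z) := by
  classical
  have hpos : ∀ x y : Vert n m p q, x ≠ y → (G E).dist x y ≠ 0 := by
    intro x y hxy h
    rcases SimpleGraph.dist_eq_zero_iff_eq_or_not_reachable.mp h with h' | h'
    · exact hxy h'
    · exact h' (reach E hn hm hn2 hm2 hfull x y)
  by_cases hza : z = a
  · subst hza
    refine iff_of_true ?_ (Or.inl rfl)
    rw [SimpleGraph.dist_self]
    exact fun h => hpos b z (fun h' => hab h'.symm) h.symm
  · by_cases hzb : z = b
    · subst hzb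
      refine iff_of_true ?_ (Or.inr (Or.inl rfl))
      rw [SimpleGraph.dist_self]
      exact hpos a z hab
    · have haz : a ≠ z := fun h => hza h.symm
      have hbz : b ≠ z := fun h => hzb h.symm
      have key : ∀ x y : Vert n m p q, x ≠ y →
          (G E).dist x y = if (G E).Adj x y then 1 else 2 := by
        intro x y hxy
        by_cases h : (G E).Adj x y
        · rw [if_pos h]; exact SimpleGraph.dist_eq_one_iff_adj.mpr h
        · rw [if_neg h]; exact dist_two E hn hm hn2 hm2 hfull hxy h
      rw [key a z haz, key b z hbz]
      by_cases h1 : (G E).Adj a z <;> by_cases h2 : (G E).Adj b z <;>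
        norm_num [h1, h2, hza, hzb]


private lemma resolving_ZT (E : Fin m → Set (Fin n))
    (hn : n = 2 ^ p) (hm : m = 2 ^ q) (hn2 : 2 < n) (hm2 : 2 < m)
    (hfull : ∀ j : Fin m, E j ≠ Set.univ)
    (x : Fin (p + 1) → Bool) (y : Fin (q + 1) → Bool)
    (T : Set (Fin n)) (hT : IsTransversal E T) :
    IsResolvingSet (G E)
      (((Set.range fun k => if x k then (Vert.u k : Vert n m p q) else Vert.u' k) ∪
        (Set.range fun k => if y k then (Vert.w k : Vert n m p q) else Vert.w' k)) ∪
       ((Vert.v : Fin n → Vert n m p q) '' T)) := by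
  have hp1 : 1 ≤ p := by
    rcases Nat.eq_zero_or_pos p with h | h
    · subst h; rw [hn] at hn2; norm_num at hn2
    · exact h
  have hq1 : 1 ≤ q := by
    rcases Nat.eq_zero_or_pos q with h | h
    · subst h; rw [hm] at hm2; norm_num at hm2
    · exact h
  have hbv : ∀ i : Fin n, i.val + 1 < 2 ^ (p + 1) := by
    intro i
    have h1 : i.val + 1 ≤ 2 ^ p := by rw [← hn]; exact i.2
    have h2 : (2:ℕ) ^ p < 2 ^ (p + 1) := Nat.pow_lt_pow_succ (by norm_num)
    omega
  have hbe : ∀ j : Fin m, j.val + 1 < 2 ^ (q + 1) := by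
    intro j
    have h1 : j.val + 1 ≤ 2 ^ q := by rw [← hm]; exact j.2
    have h2 : (2:ℕ) ^ q < 2 ^ (q + 1) := Nat.pow_lt_pow_succ (by norm_num)
    omega
  intro a b hab
  set S0 := (((Set.range fun k => if x k then (Vert.u k : Vert n m p q) else Vert.u' k) ∪
        (Set.range fun k => if y k then (Vert.w k : Vert n m p q) else Vert.w' k)) ∪
       ((Vert.v : Fin n → Vert n m p q) '' T)) with hS0
  have hmu : ∀ k : Fin (p + 1),
      (if x k then (Vert.u k : Vert n m p q) else Vert.u' k) ∈ S0 :=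
    fun k => Set.mem_union_left _ (Set.mem_union_left _ ⟨k, rfl⟩)
  have hmw : ∀ l : Fin (q + 1),
      (if y l then (Vert.w l : Vert n m p q) else Vert.w' l) ∈ S0 :=
    fun l => Set.mem_union_left _ (Set.mem_union_right _ ⟨l, rfl⟩)
  have hmv : ∀ i : Fin n, i ∈ T → (Vert.v i : Vert n m p q) ∈ S0 :=
    fun i hi => Set.mem_union_right _ ⟨i, hi, rfl⟩
  suffices h : ∃ z ∈ S0, z = a ∨ z = b ∨ ¬((G E).Adj a z ↔ (G E).Adj b z) by
    obtain ⟨z, h1, h2⟩ := h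
    exact ⟨z, h1, (dist_ne_iff E hn hm hn2 hm2 hfull hab).mpr h2⟩
  rcases a with i | j | j | k | k | l | l <;> rcases b with i' | j' | j' | k' | k' | l' | l'
  -- a = v i
  · -- b = v i'
    have hii : i ≠ i' := fun h => hab (congrArg Vert.v h)
    have hne : i.val + 1 ≠ i'.val + 1 := fun h => hii (Fin.ext (by omega))
    obtain ⟨k, hk⟩ := bits_exists_ne hne (hbv i) (hbv i')
    refine ⟨_, hmu k, Or.inr (Or.inr fun hcon => ?_)⟩
    by_cases hx : x k = true <;>
      simp [hx, G, SimpleGraph.fromRel_adj, baseRel] at hcon <;>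
      first
        | exact hk (bool_iff_eq hcon)
        | exact hk hcon
        | simp_all
  · -- b = e j'
    obtain ⟨k, hk⟩ := bits_exists_false (a := i.val + 1) hp1 (by rw [← hn]; exact i.2)
    refine ⟨_, hmu k, Or.inr (Or.inr fun hcon => ?_)⟩
    by_cases hx : x k = true <;>
      simp [hx, hk, G, SimpleGraph.fromRel_adj, baseRel] at hcon
  · -- b = e' j'
    obtain ⟨k, hk⟩ := bits_exists_false (a := i.val + 1) hp1 (by rw [← hn]; exact i.2)
    refine ⟨_, hmu k, Or.inr (Or.inr fun hcon => ?_)⟩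
    by_cases hx : x k = true <;>
      simp [hx, hk, G, SimpleGraph.fromRel_adj, baseRel] at hcon
  · -- b = u k'
    refine ⟨_, hmw 0, Or.inr (Or.inr fun hcon => ?_)⟩
    by_cases hy : y 0 = true <;>
      simp [hy, G, SimpleGraph.fromRel_adj, baseRel] at hcon
  · -- b = u' k'
    refine ⟨_, hmw 0, Or.inr (Or.inr fun hcon => ?_)⟩
    by_cases hy : y 0 = true <;>
      simp [hy, G, SimpleGraph.fromRel_adj, baseRel] at hcon
  · -- b = w l'
    obtain ⟨k, hk⟩ := bits_exists_true (a := i.val + 1) (by omega) (hbv i)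
    refine ⟨_, hmu k, Or.inr (Or.inr fun hcon => ?_)⟩
    by_cases hx : x k = true <;>
      simp [hx, hk, G, SimpleGraph.fromRel_adj, baseRel] at hcon
  · -- b = w' l'
    obtain ⟨k, hk⟩ := bits_exists_true (a := i.val + 1) (by omega) (hbv i)
    refine ⟨_, hmu k, Or.inr (Or.inr fun hcon => ?_)⟩
    by_cases hx : x k = true <;>
      simp [hx, hk, G, SimpleGraph.fromRel_adj, baseRel] at hcon
  -- a = e j
  · -- b = v i'
    obtain ⟨k, hk⟩ := bits_exists_false (a := i'.val + 1) hp1 (by rw [← hn]; exact i'.2)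
    refine ⟨_, hmu k, Or.inr (Or.inr fun hcon => ?_)⟩
    by_cases hx : x k = true <;>
      simp [hx, hk, G, SimpleGraph.fromRel_adj, baseRel] at hcon
  · -- b = e j'
    have hjj : j ≠ j' := fun h => hab (congrArg Vert.e h)
    have hne : j.val + 1 ≠ j'.val + 1 := fun h => hjj (Fin.ext (by omega))
    obtain ⟨l, hl⟩ := bits_exists_ne hne (hbe j) (hbe j')
    refine ⟨_, hmw l, Or.inr (Or.inr fun hcon => ?_)⟩
    by_cases hy : y l = true <;>
      simp [hy, G, SimpleGraph.fromRel_adj, baseRel] at hcon <;>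
      first
        | exact hl (bool_iff_eq hcon)
        | exact hl hcon
        | simp_all
  · -- b = e' j'
    by_cases hjj : j = j'
    · subst hjj
      obtain ⟨iT, hiT, hiE⟩ := hT j
      refine ⟨_, hmv iT hiT, Or.inr (Or.inr fun hcon => ?_)⟩
      simp [hiE, G, SimpleGraph.fromRel_adj, baseRel] at hcon
    · have hne : j.val + 1 ≠ j'.val + 1 := fun h => hjj (Fin.ext (by omega))
      obtain ⟨l, hl⟩ := bits_exists_ne hne (hbe j) (hbe j')
      refine ⟨_, hmw l, Or.inr (Or.inr fun hcon => ?_)⟩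
      by_cases hy : y l = true <;>
        simp [hy, G, SimpleGraph.fromRel_adj, baseRel] at hcon <;>
        first
          | exact hl (bool_iff_eq hcon)
          | exact hl hcon
          | simp_all
  · -- b = u k'
    obtain ⟨l, hl⟩ := bits_exists_true (a := j.val + 1) (by omega) (hbe j)
    refine ⟨_, hmw l, Or.inr (Or.inr fun hcon => ?_)⟩
    by_cases hy : y l = true <;>
      simp [hy, hl, G, SimpleGraph.fromRel_adj, baseRel] at hcon
  · -- b = u' k'
    obtain ⟨l, hl⟩ := bits_exists_true (a := j.val + 1) (by omega) (hbe j)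
    refine ⟨_, hmw l, Or.inr (Or.inr fun hcon => ?_)⟩
    by_cases hy : y l = true <;>
      simp [hy, hl, G, SimpleGraph.fromRel_adj, baseRel] at hcon
  · -- b = w l'
    refine ⟨_, hmu 0, Or.inr (Or.inr fun hcon => ?_)⟩
    by_cases hx : x 0 = true <;>
      simp [hx, G, SimpleGraph.fromRel_adj, baseRel] at hcon
  · -- b = w' l'
    refine ⟨_, hmu 0, Or.inr (Or.inr fun hcon => ?_)⟩
    by_cases hx : x 0 = true <;>
      simp [hx, G, SimpleGraph.fromRel_adj, baseRel] at hcon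
  -- a = e' j
  · -- b = v i'
    obtain ⟨k, hk⟩ := bits_exists_false (a := i'.val + 1) hp1 (by rw [← hn]; exact i'.2)
    refine ⟨_, hmu k, Or.inr (Or.inr fun hcon => ?_)⟩
    by_cases hx : x k = true <;>
      simp [hx, hk, G, SimpleGraph.fromRel_adj, baseRel] at hcon
  · -- b = e j'
    by_cases hjj : j = j'
    · subst hjj
      obtain ⟨iT, hiT, hiE⟩ := hT j
      refine ⟨_, hmv iT hiT, Or.inr (Or.inr fun hcon => ?_)⟩
      simp [hiE, G, SimpleGraph.fromRel_adj, baseRel] at hcon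
    · have hne : j.val + 1 ≠ j'.val + 1 := fun h => hjj (Fin.ext (by omega))
      obtain ⟨l, hl⟩ := bits_exists_ne hne (hbe j) (hbe j')
      refine ⟨_, hmw l, Or.inr (Or.inr fun hcon => ?_)⟩
      by_cases hy : y l = true <;>
        simp [hy, G, SimpleGraph.fromRel_adj, baseRel] at hcon <;>
        first
          | exact hl (bool_iff_eq hcon)
          | exact hl hcon
          | simp_all
  · -- b = e' j'
    have hjj : j ≠ j' := fun h => hab (congrArg Vert.e' h)
    have hne : j.val + 1 ≠ j'.val + 1 := fun h => hjj (Fin.ext (by omega))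
    obtain ⟨l, hl⟩ := bits_exists_ne hne (hbe j) (hbe j')
    refine ⟨_, hmw l, Or.inr (Or.inr fun hcon => ?_)⟩
    by_cases hy : y l = true <;>
      simp [hy, G, SimpleGraph.fromRel_adj, baseRel] at hcon <;>
      first
        | exact hl (bool_iff_eq hcon)
        | exact hl hcon
        | simp_all
  · -- b = u k'
    obtain ⟨l, hl⟩ := bits_exists_true (a := j.val + 1) (by omega) (hbe j)
    refine ⟨_, hmw l, Or.inr (Or.inr fun hcon => ?_)⟩
    by_cases hy : y l = true <;>
      simp [hy, hl, G, SimpleGraph.fromRel_adj, baseRel] at hcon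
  · -- b = u' k'
    obtain ⟨l, hl⟩ := bits_exists_true (a := j.val + 1) (by omega) (hbe j)
    refine ⟨_, hmw l, Or.inr (Or.inr fun hcon => ?_)⟩
    by_cases hy : y l = true <;>
      simp [hy, hl, G, SimpleGraph.fromRel_adj, baseRel] at hcon
  · -- b = w l'
    refine ⟨_, hmu 0, Or.inr (Or.inr fun hcon => ?_)⟩
    by_cases hx : x 0 = true <;>
      simp [hx, G, SimpleGraph.fromRel_adj, baseRel] at hcon
  · -- b = w' l'
    refine ⟨_, hmu 0, Or.inr (Or.inr fun hcon => ?_)⟩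
    by_cases hx : x 0 = true <;>
      simp [hx, G, SimpleGraph.fromRel_adj, baseRel] at hcon
  -- a = u k
  · -- b = v i'
    refine ⟨_, hmw 0, Or.inr (Or.inr fun hcon => ?_)⟩
    by_cases hy : y 0 = true <;>
      simp [hy, G, SimpleGraph.fromRel_adj, baseRel] at hcon
  · -- b = e j'
    obtain ⟨l, hl⟩ := bits_exists_true (a := j'.val + 1) (by omega) (hbe j')
    refine ⟨_, hmw l, Or.inr (Or.inr fun hcon => ?_)⟩
    by_cases hy : y l = true <;>
      simp [hy, hl, G, SimpleGraph.fromRel_adj, baseRel] at hcon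
  · -- b = e' j'
    obtain ⟨l, hl⟩ := bits_exists_true (a := j'.val + 1) (by omega) (hbe j')
    refine ⟨_, hmw l, Or.inr (Or.inr fun hcon => ?_)⟩
    by_cases hy : y l = true <;>
      simp [hy, hl, G, SimpleGraph.fromRel_adj, baseRel] at hcon
  · -- b = u k'
    have hne : k ≠ k' := fun h => hab (congrArg Vert.u h)
    refine ⟨_, hmu k, ?_⟩
    by_cases hx : x k = true
    · exact Or.inl (by simp [hx])
    · refine Or.inr (Or.inr fun hcon => ?_)
      simp [hx, hne, Ne.symm hne, G, SimpleGraph.fromRel_adj, baseRel] at hcon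
  · -- b = u' k'
    by_cases hkk : k = k'
    · subst hkk
      refine ⟨_, hmu k, ?_⟩
      by_cases hx : x k = true
      · exact Or.inl (by simp [hx])
      · exact Or.inr (Or.inl (by simp [hx]))
    · refine ⟨_, hmu k, ?_⟩
      by_cases hx : x k = true
      · exact Or.inl (by simp [hx])
      · refine Or.inr (Or.inr fun hcon => ?_)
        simp [hx, hkk, Ne.symm hkk, G, SimpleGraph.fromRel_adj, baseRel] at hcon
  · -- b = w l'
    refine ⟨_, hmw l', ?_⟩
    by_cases hy : y l' = true
    · exact Or.inr (Or.inl (by simp [hy]))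
    · refine Or.inr (Or.inr fun hcon => ?_)
      simp [hy, G, SimpleGraph.fromRel_adj, baseRel] at hcon
  · -- b = w' l'
    refine ⟨_, hmw l', ?_⟩
    by_cases hy : y l' = true
    · refine Or.inr (Or.inr fun hcon => ?_)
      simp [hy, G, SimpleGraph.fromRel_adj, baseRel] at hcon
    · exact Or.inr (Or.inl (by simp [hy]))
  -- a = u' k
  · -- b = v i'
    refine ⟨_, hmw 0, Or.inr (Or.inr fun hcon => ?_)⟩
    by_cases hy : y 0 = true <;>
      simp [hy, G, SimpleGraph.fromRel_adj, baseRel] at hcon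
  · -- b = e j'
    obtain ⟨l, hl⟩ := bits_exists_true (a := j'.val + 1) (by omega) (hbe j')
    refine ⟨_, hmw l, Or.inr (Or.inr fun hcon => ?_)⟩
    by_cases hy : y l = true <;>
      simp [hy, hl, G, SimpleGraph.fromRel_adj, baseRel] at hcon
  · -- b = e' j'
    obtain ⟨l, hl⟩ := bits_exists_true (a := j'.val + 1) (by omega) (hbe j')
    refine ⟨_, hmw l, Or.inr (Or.inr fun hcon => ?_)⟩
    by_cases hy : y l = true <;>
      simp [hy, hl, G, SimpleGraph.fromRel_adj, baseRel] at hcon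
  · -- b = u k'
    by_cases hkk : k = k'
    · subst hkk
      refine ⟨_, hmu k, ?_⟩
      by_cases hx : x k = true
      · exact Or.inr (Or.inl (by simp [hx]))
      · exact Or.inl (by simp [hx])
    · refine ⟨_, hmu k, ?_⟩
      by_cases hx : x k = true
      · refine Or.inr (Or.inr fun hcon => ?_)
        simp [hx, hkk, Ne.symm hkk, G, SimpleGraph.fromRel_adj, baseRel] at hcon
      · exact Or.inl (by simp [hx])
  · -- b = u' k'
    have hne : k ≠ k' := fun h => hab (congrArg Vert.u' h)
    refine ⟨_, hmu k, ?_⟩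
    by_cases hx : x k = true
    · refine Or.inr (Or.inr fun hcon => ?_)
      simp [hx, hne, Ne.symm hne, G, SimpleGraph.fromRel_adj, baseRel] at hcon
    · exact Or.inl (by simp [hx])
  · -- b = w l'
    refine ⟨_, hmw l', ?_⟩
    by_cases hy : y l' = true
    · exact Or.inr (Or.inl (by simp [hy]))
    · refine Or.inr (Or.inr fun hcon => ?_)
      simp [hy, G, SimpleGraph.fromRel_adj, baseRel] at hcon
  · -- b = w' l'
    refine ⟨_, hmw l', ?_⟩
    by_cases hy : y l' = true
    · refine Or.inr (Or.inr fun hcon => ?_)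
      simp [hy, G, SimpleGraph.fromRel_adj, baseRel] at hcon
    · exact Or.inr (Or.inl (by simp [hy]))
  -- a = w l
  · -- b = v i'
    obtain ⟨k, hk⟩ := bits_exists_true (a := i'.val + 1) (by omega) (hbv i')
    refine ⟨_, hmu k, Or.inr (Or.inr fun hcon => ?_)⟩
    by_cases hx : x k = true <;>
      simp [hx, hk, G, SimpleGraph.fromRel_adj, baseRel] at hcon
  · -- b = e j'
    refine ⟨_, hmu 0, Or.inr (Or.inr fun hcon => ?_)⟩
    by_cases hx : x 0 = true <;>
      simp [hx, G, SimpleGraph.fromRel_adj, baseRel] at hcon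
  · -- b = e' j'
    refine ⟨_, hmu 0, Or.inr (Or.inr fun hcon => ?_)⟩
    by_cases hx : x 0 = true <;>
      simp [hx, G, SimpleGraph.fromRel_adj, baseRel] at hcon
  · -- b = u k'
    refine ⟨_, hmw l, ?_⟩
    by_cases hy : y l = true
    · exact Or.inl (by simp [hy])
    · refine Or.inr (Or.inr fun hcon => ?_)
      simp [hy, G, SimpleGraph.fromRel_adj, baseRel] at hcon
  · -- b = u' k'
    refine ⟨_, hmw l, ?_⟩
    by_cases hy : y l = true
    · exact Or.inl (by simp [hy])
    · refine Or.inr (Or.inr fun hcon => ?_)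
      simp [hy, G, SimpleGraph.fromRel_adj, baseRel] at hcon
  · -- b = w l'
    have hne : l ≠ l' := fun h => hab (congrArg Vert.w h)
    refine ⟨_, hmw l, ?_⟩
    by_cases hy : y l = true
    · exact Or.inl (by simp [hy])
    · refine Or.inr (Or.inr fun hcon => ?_)
      simp [hy, hne, Ne.symm hne, G, SimpleGraph.fromRel_adj, baseRel] at hcon
  · -- b = w' l'
    by_cases hll : l = l'
    · subst hll
      refine ⟨_, hmw l, ?_⟩
      by_cases hy : y l = true
      · exact Or.inl (by simp [hy])
      · exact Or.inr (Or.inl (by simp [hy]))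
    · refine ⟨_, hmw l, ?_⟩
      by_cases hy : y l = true
      · exact Or.inl (by simp [hy])
      · refine Or.inr (Or.inr fun hcon => ?_)
        simp [hy, hll, Ne.symm hll, G, SimpleGraph.fromRel_adj, baseRel] at hcon
  -- a = w' l
  · -- b = v i'
    obtain ⟨k, hk⟩ := bits_exists_true (a := i'.val + 1) (by omega) (hbv i')
    refine ⟨_, hmu k, Or.inr (Or.inr fun hcon => ?_)⟩
    by_cases hx : x k = true <;>
      simp [hx, hk, G, SimpleGraph.fromRel_adj, baseRel] at hcon
  · -- b = e j'
    refine ⟨_, hmu 0, Or.inr (Or.inr fun hcon => ?_)⟩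
    by_cases hx : x 0 = true <;>
      simp [hx, G, SimpleGraph.fromRel_adj, baseRel] at hcon
  · -- b = e' j'
    refine ⟨_, hmu 0, Or.inr (Or.inr fun hcon => ?_)⟩
    by_cases hx : x 0 = true <;>
      simp [hx, G, SimpleGraph.fromRel_adj, baseRel] at hcon
  · -- b = u k'
    refine ⟨_, hmw l, ?_⟩
    by_cases hy : y l = true
    · refine Or.inr (Or.inr fun hcon => ?_)
      simp [hy, G, SimpleGraph.fromRel_adj, baseRel] at hcon
    · exact Or.inl (by simp [hy])
  · -- b = u' k'
    refine ⟨_, hmw l, ?_⟩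
    by_cases hy : y l = true
    · refine Or.inr (Or.inr fun hcon => ?_)
      simp [hy, G, SimpleGraph.fromRel_adj, baseRel] at hcon
    · exact Or.inl (by simp [hy])
  · -- b = w l'
    by_cases hll : l = l'
    · subst hll
      refine ⟨_, hmw l, ?_⟩
      by_cases hy : y l = true
      · exact Or.inr (Or.inl (by simp [hy]))
      · exact Or.inl (by simp [hy])
    · refine ⟨_, hmw l, ?_⟩
      by_cases hy : y l = true
      · refine Or.inr (Or.inr fun hcon => ?_)
        simp [hy, hll, Ne.symm hll, G, SimpleGraph.fromRel_adj, baseRel] at hcon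
      · exact Or.inl (by simp [hy])
  · -- b = w' l'
    have hne : l ≠ l' := fun h => hab (congrArg Vert.w' h)
    refine ⟨_, hmw l, ?_⟩
    by_cases hy : y l = true
    · refine Or.inr (Or.inr fun hcon => ?_)
      simp [hy, hne, Ne.symm hne, G, SimpleGraph.fromRel_adj, baseRel] at hcon
    · exact Or.inl (by simp [hy])

/-- In the graph `G` of the resolving-set construction, if `S` is a minimal resolving set
with `S ∩ (H ∪ H') = ∅`, then `S = Z ∪ T` for some `Z ∈ 𝒵` and some minimal transversal
`T` of `ℋ`. -/
theorem minimal_resolving_avoiding_HH'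
    (E : Fin m → Set (Fin n))
    (hn : n = 2 ^ p) (hm : m = 2 ^ q) (hn2 : 2 < n) (hm2 : 2 < m)
    (hSperner : ∀ j j' : Fin m, E j ⊆ E j' → j = j')
    (hfull : ∀ j : Fin m, E j ≠ Set.univ)
    (S : Set (Vert n m p q)) (hS : IsMinimalResolvingSet (G E) S)
    (hdisj : S ∩ (Set.range (Vert.e : Fin m → Vert n m p q) ∪
      Set.range (Vert.e' : Fin m → Vert n m p q)) = ∅) :
    ∃ Z ∈ (ZFam : Set (Set (Vert n m p q))),
      ∃ T : Set (Fin n), IsMinimalTransversal E T ∧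
        S = Z ∪ (Vert.v : Fin n → Vert n m p q) '' T := by
  classical
  obtain ⟨hres, hmin⟩ := hS
  have heS : ∀ j : Fin m, Vert.e j ∉ S := by
    intro j hj
    have hmem : Vert.e j ∈ S ∩ (Set.range (Vert.e : Fin m → Vert n m p q) ∪
        Set.range (Vert.e' : Fin m → Vert n m p q)) := ⟨hj, Set.mem_union_left _ ⟨j, rfl⟩⟩
    rw [hdisj] at hmem
    exact hmem
  have he'S : ∀ j : Fin m, Vert.e' j ∉ S := by
    intro j hj
    have hmem : Vert.e' j ∈ S ∩ (Set.range (Vert.e : Fin m → Vert n m p q) ∪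
        Set.range (Vert.e' : Fin m → Vert n m p q)) := ⟨hj, Set.mem_union_right _ ⟨j, rfl⟩⟩
    rw [hdisj] at hmem
    exact hmem
  have hU : ∀ k : Fin (p + 1), Vert.u k ∈ S ∨ Vert.u' k ∈ S := by
    intro k
    obtain ⟨z, hzS, hz⟩ := hres (Vert.u k) (Vert.u' k) (by simp)
    rw [dist_ne_iff E hn hm hn2 hm2 hfull (by simp)] at hz
    rcases hz with rfl | rfl | hz
    · exact Or.inl hzS
    · exact Or.inr hzS
    · exfalso
      rcases z with i | j | j | k₂ | k₂ | l₂ | l₂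
      · simp [G, SimpleGraph.fromRel_adj, baseRel] at hz
      · simp [G, SimpleGraph.fromRel_adj, baseRel] at hz
      · simp [G, SimpleGraph.fromRel_adj, baseRel] at hz
      · simp [G, SimpleGraph.fromRel_adj, baseRel, eq_comm] at hz
      · simp [G, SimpleGraph.fromRel_adj, baseRel, eq_comm] at hz
      · simp [G, SimpleGraph.fromRel_adj, baseRel] at hz
      · simp [G, SimpleGraph.fromRel_adj, baseRel] at hz
  have hW : ∀ l : Fin (q + 1), Vert.w l ∈ S ∨ Vert.w' l ∈ S := by
    intro l
    obtain ⟨z, hzS, hz⟩ := hres (Vert.w l) (Vert.w' l) (by simp)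
    rw [dist_ne_iff E hn hm hn2 hm2 hfull (by simp)] at hz
    rcases hz with rfl | rfl | hz
    · exact Or.inl hzS
    · exact Or.inr hzS
    · rcases z with i | j | j | k₂ | k₂ | l₂ | l₂
      · simp [G, SimpleGraph.fromRel_adj, baseRel] at hz
      · simp [G, SimpleGraph.fromRel_adj, baseRel] at hz
      · simp [G, SimpleGraph.fromRel_adj, baseRel] at hz
      · simp [G, SimpleGraph.fromRel_adj, baseRel] at hz
      · simp [G, SimpleGraph.fromRel_adj, baseRel] at hz
      · simp [G, SimpleGraph.fromRel_adj, baseRel] at hz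
        subst hz
        exact Or.inl hzS
      · simp [G, SimpleGraph.fromRel_adj, baseRel] at hz
        subst hz
        exact Or.inr hzS
  have hUx : ∀ k : Fin (p + 1), ∃ bb : Bool,
      (if bb then (Vert.u k : Vert n m p q) else Vert.u' k) ∈ S := by
    intro k
    rcases hU k with h | h
    · exact ⟨true, by simpa using h⟩
    · exact ⟨false, by simpa using h⟩
  have hWy : ∀ l : Fin (q + 1), ∃ bb : Bool,
      (if bb then (Vert.w l : Vert n m p q) else Vert.w' l) ∈ S := by
    intro l
    rcases hW l with h | h
    · exact ⟨true, by simpa using h⟩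
    · exact ⟨false, by simpa using h⟩
  choose x hxS using hUx
  choose y hyS using hWy
  set T : Set (Fin n) := {i : Fin n | Vert.v i ∈ S} with hTdef
  have hTrans : IsTransversal E T := by
    intro j
    obtain ⟨z, hzS, hz⟩ := hres (Vert.e j) (Vert.e' j) (by simp)
    rw [dist_ne_iff E hn hm hn2 hm2 hfull (by simp)] at hz
    rcases hz with rfl | rfl | hz
    · exact absurd hzS (heS j)
    · exact absurd hzS (he'S j)
    · rcases z with i | j₂ | j₂ | k₂ | k₂ | l₂ | l₂
      · simp [G, SimpleGraph.fromRel_adj, baseRel] at hz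
        exact ⟨i, hzS, hz⟩
      · exact absurd hzS (heS j₂)
      · exact absurd hzS (he'S j₂)
      · simp [G, SimpleGraph.fromRel_adj, baseRel] at hz
      · simp [G, SimpleGraph.fromRel_adj, baseRel] at hz
      · simp [G, SimpleGraph.fromRel_adj, baseRel] at hz
      · simp [G, SimpleGraph.fromRel_adj, baseRel] at hz
  set Z := (Set.range fun k => if x k then (Vert.u k : Vert n m p q) else Vert.u' k) ∪
           (Set.range fun k => if y k then (Vert.w k : Vert n m p q) else Vert.w' k) with hZdef
  have hZsub : Z ⊆ S := by
    rintro z (⟨k, rfl⟩ | ⟨l, rfl⟩)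
    · exact hxS k
    · exact hyS l
  have hsub : Z ∪ ((Vert.v : Fin n → Vert n m p q) '' T) ⊆ S := by
    rintro z (hz | ⟨i, hi, rfl⟩)
    · exact hZsub hz
    · exact hi
  have hres0 : IsResolvingSet (G E) (Z ∪ ((Vert.v : Fin n → Vert n m p q) '' T)) := by
    rw [hZdef]
    exact resolving_ZT E hn hm hn2 hm2 hfull x y T hTrans
  have hseq : Z ∪ ((Vert.v : Fin n → Vert n m p q) '' T) = S := by
    by_contra hne
    exact hmin _ (Set.ssubset_iff_subset_ne.mpr ⟨hsub, hne⟩) hres0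
  refine ⟨Z, ⟨x, y, hZdef⟩, T, ⟨hTrans, ?_⟩, hseq.symm⟩
  intro T' hT' hTrans'
  have hres' : IsResolvingSet (G E) (Z ∪ ((Vert.v : Fin n → Vert n m p q) '' T')) := by
    rw [hZdef]
    exact resolving_ZT E hn hm hn2 hm2 hfull x y T' hTrans'
  obtain ⟨i, hiT, hiT'⟩ := Set.exists_of_ssubset hT'
  have hsub' : Z ∪ ((Vert.v : Fin n → Vert n m p q) '' T') ⊆ S := by
    rintro z (hz | ⟨i', hi', rfl⟩)
    · exact hZsub hz
    · exact (hT'.1 hi' : i' ∈ T)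
  have hne' : Z ∪ ((Vert.v : Fin n → Vert n m p q) '' T') ≠ S := by
    intro hEq
    have hvS : Vert.v i ∈ S := hiT
    rw [← hEq] at hvS
    rcases hvS with hz | ⟨i', hi', hvi⟩
    · rw [hZdef] at hz
      rcases hz with ⟨k, hk⟩ | ⟨l, hl⟩
      · by_cases hb : x k = true <;> simp [hb] at hk
      · by_cases hb : y l = true <;> simp [hb] at hl
    · injection hvi with h
      exact hiT' (h ▸ hi')
  exact hmin _ (Set.ssubset_iff_subset_ne.mpr ⟨hsub', hne'⟩) hres'


end ResConstr
end
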